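/- arXiv:0802.0156 — 2 statements merged into one kernel-verified Lean document; each statement's English description precedes it below -/
import Mathlib

section
/- Let T' be an inductive continuous first-order theory. Then 𝔖_{T'} is a G_δ subset of the Polish space 𝔖. -/
open scoped Classical

/-! ### A core of continuous first-order logic (countable relational signatures) -/

/-- A countable relational continuous signature: relation symbols indexed by `ℕ`
(with a distinguished metric symbol handled separately in the syntax below),
each with an arity and a prescribed uniform-continuity modulus. -/
structure CSig where
  arity : ℕ → ℕ
  modulus : ℕ → ℝ → ℝ
  modulus_pos : ∀ i ε, 0 < ε → 0 < modulus i ε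

/-- Continuous first-order formulas over `S`, with free variables among `Fin n`.
Connectives: rational constants, pointwise min and max, negation `1 - x`,
truncated plus, truncated minus, `|x - y|`, rescaling by rationals; quantifiers
`inf` and `sup` bind the last variable. -/
inductive CFormula (S : CSig) : ℕ → Type
  | dst : ∀ {n}, Fin n → Fin n → CFormula S n
  | rel : ∀ {n} (i : ℕ), (Fin (S.arity i) → Fin n) → CFormula S n
  | const : ∀ {n}, ℚ → CFormula S n
  | fmin : ∀ {n}, CFormula S n → CFormula S n → CFormula S n
  | fmax : ∀ {n}, CFormula S n → CFormula S n → CFormula S n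
  | neg : ∀ {n}, CFormula S n → CFormula S n
  | addT : ∀ {n}, CFormula S n → CFormula S n → CFormula S n
  | subT : ∀ {n}, CFormula S n → CFormula S n → CFormula S n
  | absd : ∀ {n}, CFormula S n → CFormula S n → CFormula S n
  | scale : ∀ {n}, ℚ → CFormula S n → CFormula S n
  | inf : ∀ {n}, CFormula S (n + 1) → CFormula S n
  | sup : ∀ {n}, CFormula S (n + 1) → CFormula S n

/-- Sentences: formulas with no free variables. -/
abbrev CSentence (S : CSig) := CFormula S 0

/-- Quantifier-free formulas. -/
inductive IsQF {S : CSig} : ∀ {n}, CFormula S n → Prop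
  | dst {n} (a b : Fin n) : IsQF (CFormula.dst a b)
  | rel {n} (i : ℕ) (ts : Fin (S.arity i) → Fin n) : IsQF (CFormula.rel i ts)
  | const {n} (q : ℚ) : IsQF (CFormula.const (n := n) q)
  | fmin {n} {φ ψ : CFormula S n} : IsQF φ → IsQF ψ → IsQF (CFormula.fmin φ ψ)
  | fmax {n} {φ ψ : CFormula S n} : IsQF φ → IsQF ψ → IsQF (CFormula.fmax φ ψ)
  | neg {n} {φ : CFormula S n} : IsQF φ → IsQF (CFormula.neg φ)
  | addT {n} {φ ψ : CFormula S n} : IsQF φ → IsQF ψ → IsQF (CFormula.addT φ ψ)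
  | subT {n} {φ ψ : CFormula S n} : IsQF φ → IsQF ψ → IsQF (CFormula.subT φ ψ)
  | absd {n} {φ ψ : CFormula S n} : IsQF φ → IsQF ψ → IsQF (CFormula.absd φ ψ)
  | scale {n} (q : ℚ) {φ : CFormula S n} : IsQF φ → IsQF (CFormula.scale q φ)

/-- Closure of a class of formulas under (finitely many applications of) `inf`. -/
inductive InfCl {S : CSig} (P : ∀ n, CFormula S n → Prop) : ∀ {n}, CFormula S n → Prop
  | base {n} {φ : CFormula S n} : P n φ → InfCl P φ
  | step {n} {φ : CFormula S (n + 1)} : InfCl P φ → InfCl P (CFormula.inf φ)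

/-- Closure of a class of formulas under (finitely many applications of) `sup`. -/
inductive SupCl {S : CSig} (P : ∀ n, CFormula S n → Prop) : ∀ {n}, CFormula S n → Prop
  | base {n} {φ : CFormula S n} : P n φ → SupCl P φ
  | step {n} {φ : CFormula S (n + 1)} : SupCl P φ → SupCl P (CFormula.sup φ)

/-- The pair (Σₖ, Πₖ) of formula classes: Σ₀ = Π₀ = quantifier-free,
Σ_{k+1} = { inf_x̄ φ : φ ∈ Πₖ }, Π_{k+1} = { sup_x̄ φ : φ ∈ Σₖ }. -/
def SigmaPi (S : CSig) : ℕ → ((∀ n, CFormula S n → Prop) × (∀ n, CFormula S n → Prop))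
  | 0 => (fun _ φ => IsQF φ, fun _ φ => IsQF φ)
  | k + 1 => (fun _ φ => InfCl (SigmaPi S k).2 φ, fun _ φ => SupCl (SigmaPi S k).1 φ)

/-- `φ` is a Σₖ formula. -/
def IsSigmaN (S : CSig) (k : ℕ) {n : ℕ} (φ : CFormula S n) : Prop := (SigmaPi S k).1 n φ

/-- `φ` is a Πₖ formula. -/
def IsPiN (S : CSig) (k : ℕ) {n : ℕ} (φ : CFormula S n) : Prop := (SigmaPi S k).2 n φ

/-- A continuous `L`-structure: a nonempty complete metric space of diameter `≤ 1`
with `[0,1]`-valued interpretations of all predicate symbols, uniformly continuous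
with respect to the prescribed moduli. -/
structure CStructure (S : CSig) where
  Carrier : Type
  metric : MetricSpace Carrier
  nonempty : Nonempty Carrier
  complete : @CompleteSpace Carrier metric.toUniformSpace
  bounded : ∀ x y : Carrier, @dist Carrier metric.toDist x y ≤ 1
  rel : ∀ i, (Fin (S.arity i) → Carrier) → ℝ
  rel_nonneg : ∀ i v, 0 ≤ rel i v
  rel_le_one : ∀ i v, rel i v ≤ 1
  rel_uc : ∀ i (ε : ℝ), 0 < ε → ∀ v w,
    (∀ j, @dist Carrier metric.toDist (v j) (w j) < S.modulus i ε) → |rel i v - rel i w| ≤ ε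

attribute [instance] CStructure.metric CStructure.nonempty CStructure.complete

/-- Clamp a rational constant into `[0,1]`. -/
noncomputable def clampQ (q : ℚ) : ℝ := max 0 (min 1 (q : ℝ))

/-- The value of a formula in a structure under a variable assignment. -/
noncomputable def CStructure.eval {S : CSig} (M : CStructure S) :
    ∀ (n : ℕ), CFormula S n → (Fin n → M.Carrier) → ℝ
  | _, .dst a b, v => dist (v a) (v b)
  | _, .rel i ts, v => M.rel i fun j => v (ts j)
  | _, .const q, _ => clampQ q
  | n, .fmin φ ψ, v => min (M.eval n φ v) (M.eval n ψ v)
  | n, .fmax φ ψ, v => max (M.eval n φ v) (M.eval n ψ v)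
  | n, .neg φ, v => 1 - M.eval n φ v
  | n, .addT φ ψ, v => min 1 (M.eval n φ v + M.eval n ψ v)
  | n, .subT φ ψ, v => max 0 (M.eval n φ v - M.eval n ψ v)
  | n, .absd φ ψ, v => |M.eval n φ v - M.eval n ψ v|
  | n, .scale q φ, v => clampQ q * M.eval n φ v
  | n, .inf φ, v => ⨅ x : M.Carrier, M.eval (n + 1) φ (Fin.snoc v x)
  | n, .sup φ, v => ⨆ x : M.Carrier, M.eval (n + 1) φ (Fin.snoc v x)

/-- The value of a sentence in a structure. -/
noncomputable def CStructure.sval {S : CSig} (M : CStructure S) (φ : CSentence S) : ℝ :=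
  M.eval 0 φ (fun i => i.elim0)

/-- A theory: a set of closed conditions `φ ≤ ε`, coded as pairs `(φ, ε)`. -/
abbrev CTheory (S : CSig) := Set (CSentence S × ℝ)

/-- `M` satisfies the theory `T` (all its closed conditions). -/
def CStructure.SatT {S : CSig} (M : CStructure S) (T : CTheory S) : Prop :=
  ∀ c ∈ T, M.sval c.1 ≤ c.2

/-- The closed condition `φ ≤ ε` follows from `T`. -/
def Entails {S : CSig} (T : CTheory S) (c : CSentence S × ℝ) : Prop :=
  ∀ M : CStructure S, M.SatT T → M.sval c.1 ≤ c.2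

/-- The open condition `φ < ε` follows from `T`. -/
def EntailsOpen {S : CSig} (T : CTheory S) (c : CSentence S × ℝ) : Prop :=
  ∀ M : CStructure S, M.SatT T → M.sval c.1 < c.2

/-- `T` is a theory in the official sense: consistent and closed under entailment. -/
def IsTheory {S : CSig} (T : CTheory S) : Prop :=
  (∃ M : CStructure S, M.SatT T) ∧ ∀ c, Entails T c → c ∈ T

/-- `T` is universal: axiomatizable by closed conditions `sup_x̄ φ(x̄) = 0` with `φ`
quantifier-free (i.e. by conditions `ψ = 0` for Π₁ sentences `ψ`). -/
def IsUniversalTheory {S : CSig} (T : CTheory S) : Prop :=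
  ∃ A : Set (CSentence S), (∀ ψ ∈ A, IsPiN S 1 ψ) ∧
    ∀ M : CStructure S, (M.SatT T ↔ ∀ ψ ∈ A, M.sval ψ = 0)

/-- `T` is inductive: axiomatizable by open conditions `sup_x̄ inf_ȳ φ(x̄,ȳ) < ε` with `φ`
quantifier-free (i.e. by open conditions on Π₂ sentences). -/
def IsInductiveTheory {S : CSig} (T : CTheory S) : Prop :=
  ∃ A : Set (CSentence S × ℝ), (∀ c ∈ A, IsPiN S 2 c.1 ∧ 0 < c.2) ∧
    ∀ M : CStructure S, (M.SatT T ↔ ∀ c ∈ A, M.sval c.1 < c.2)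

/-- An embedding of continuous structures: an isometric map preserving all predicates. -/
structure CEmbedding {S : CSig} (M N : CStructure S) where
  toFun : M.Carrier → N.Carrier
  isometry : ∀ x y, dist (toFun x) (toFun y) = dist x y
  map_rel : ∀ i (v : Fin (S.arity i) → M.Carrier), N.rel i (toFun ∘ v) = M.rel i v

/-- An embedding is elementary if it preserves the values of all formulas. -/
def CEmbedding.Elementary {S : CSig} {M N : CStructure S} (f : CEmbedding M N) : Prop :=
  ∀ (n : ℕ) (φ : CFormula S n) (v : Fin n → M.Carrier),
    N.eval n φ (f.toFun ∘ v) = M.eval n φ v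

/-- `T` is model complete: every embedding between models of `T` is elementary. -/
def IsModelComplete {S : CSig} (T : CTheory S) : Prop :=
  ∀ M N : CStructure S, M.SatT T → N.SatT T → ∀ f : CEmbedding M N, f.Elementary

/-- `M` is an existentially closed model of `T`. -/
def IsEC {S : CSig} (T : CTheory S) (M : CStructure S) : Prop :=
  M.SatT T ∧ ∀ N : CStructure S, N.SatT T → ∀ f : CEmbedding M N,
    ∀ (n : ℕ) (φ : CFormula S (n + 1)), IsQF φ → ∀ b : Fin n → M.Carrier,
      N.eval n (CFormula.inf φ) (f.toFun ∘ b) = M.eval n (CFormula.inf φ) b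

/-- `T'` is the model companion of `T`: the models of `T'` are exactly the
existentially closed models of `T`. -/
def IsModelCompanion {S : CSig} (T T' : CTheory S) : Prop :=
  ∀ M : CStructure S, (M.SatT T' ↔ IsEC T M)

/-- `T'` is ℵ₀-categorical: any two separable models of `T'` are isomorphic. -/
def Aleph0Categorical {S : CSig} (T' : CTheory S) : Prop :=
  ∀ M N : CStructure S, M.SatT T' → N.SatT T' →
    TopologicalSpace.SeparableSpace M.Carrier → TopologicalSpace.SeparableSpace N.Carrier →
    ∃ f : CEmbedding M N, Function.Surjective f.toFun

/-! ### The Polish space `𝔖` of codes of separable structures -/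

/-- A point of `𝔖`: a separable continuous `L`-structure presented on a distinguished
countable dense subset indexed by `ℕ` — i.e. the metric and all predicate values on `ℕ`,
subject to the metric axioms and the uniform-continuity moduli. The actual structure is
the completion; since all predicates and the quantifiers are continuous, all the
first-order data is determined by this code. -/
structure SCode (S : CSig) where
  dd : ℕ → ℕ → ℝ
  R : ∀ i, (Fin (S.arity i) → ℕ) → ℝ
  dd_nonneg : ∀ i j, 0 ≤ dd i j
  dd_le_one : ∀ i j, dd i j ≤ 1
  dd_self : ∀ i, dd i i = 0
  dd_pos : ∀ i j, i ≠ j → 0 < dd i j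
  dd_symm : ∀ i j, dd i j = dd j i
  dd_triangle : ∀ i j k, dd i k ≤ dd i j + dd j k
  R_nonneg : ∀ i v, 0 ≤ R i v
  R_le_one : ∀ i v, R i v ≤ 1
  R_uc : ∀ i (ε : ℝ), 0 < ε → ∀ v w,
    (∀ j, dd (v j) (w j) < S.modulus i ε) → |R i v - R i w| ≤ ε

/-- Value of a formula on a code, under an assignment of variables to points of the
distinguished dense subset; quantifiers range over the dense subset (equivalently,
by uniform continuity, over the completion). -/
noncomputable def SCode.eval {S : CSig} (x : SCode S) :
    ∀ (n : ℕ), CFormula S n → (Fin n → ℕ) → ℝ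
  | _, .dst a b, v => x.dd (v a) (v b)
  | _, .rel i ts, v => x.R i fun j => v (ts j)
  | _, .const q, _ => clampQ q
  | n, .fmin φ ψ, v => min (x.eval n φ v) (x.eval n ψ v)
  | n, .fmax φ ψ, v => max (x.eval n φ v) (x.eval n ψ v)
  | n, .neg φ, v => 1 - x.eval n φ v
  | n, .addT φ ψ, v => min 1 (x.eval n φ v + x.eval n ψ v)
  | n, .subT φ ψ, v => max 0 (x.eval n φ v - x.eval n ψ v)
  | n, .absd φ ψ, v => |x.eval n φ v - x.eval n ψ v|
  | n, .scale q φ, v => clampQ q * x.eval n φ v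
  | n, .inf φ, v => ⨅ k : ℕ, x.eval (n + 1) φ (Fin.snoc v k)
  | n, .sup φ, v => ⨆ k : ℕ, x.eval (n + 1) φ (Fin.snoc v k)

/-- The value of a sentence on a code. -/
noncomputable def SCode.sval {S : CSig} (x : SCode S) (φ : CSentence S) : ℝ :=
  x.eval 0 φ (fun i => i.elim0)

/-- The structure coded by `x` satisfies the theory `T`. -/
def SCode.SatT {S : CSig} (x : SCode S) (T : CTheory S) : Prop :=
  ∀ c ∈ T, x.sval c.1 ≤ c.2

/-- The basic open set `U_{φ(ā),ε} = {x ∈ 𝔖 : φ^x(ā) < ε}`. -/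
def basicSet {S : CSig} (n : ℕ) (φ : CFormula S n) (a : Fin n → ℕ) (ε : ℝ) :
    Set (SCode S) :=
  {x | x.eval n φ a < ε}

/-- The topology on `𝔖` generated by the basic open sets `U_{φ(ā),ε}` for `φ`
quantifier-free, `ā` a tuple from the distinguished dense subset and `ε > 0`. -/
instance SCode.topologicalSpace (S : CSig) : TopologicalSpace (SCode S) :=
  TopologicalSpace.generateFrom
    {U | ∃ (n : ℕ) (φ : CFormula S n) (a : Fin n → ℕ) (ε : ℝ),
      IsQF φ ∧ 0 < ε ∧ U = basicSet n φ a ε}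

/-- `x` codes the structure `M`: the distinguished countable dense subset maps to a dense
sequence in `M` realizing exactly the metric and predicate values recorded in `x`
(i.e. `M` is "the completion" of `x`). For a fixed `M`, `{x ∈ 𝔖 : Codes x M}` is
precisely the isomorphism class of `M` in `𝔖`. -/
def Codes {S : CSig} (x : SCode S) (M : CStructure S) : Prop :=
  ∃ u : ℕ → M.Carrier, DenseRange u ∧ (∀ i j, dist (u i) (u j) = x.dd i j) ∧
    ∀ i (v : Fin (S.arity i) → ℕ), M.rel i (u ∘ v) = x.R i v


/-!
A code `x` and an ultraproduct are both naturally pre-structures on pseudometric spaces (`ℕ` with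
`x.dd`, resp. the full product with the ultralimit distance). Formula values are uniformly
continuous in the assignment, so the completion of a pre-structure is a continuous structure in
which every formula takes the same values on the dense image; in particular a code satisfies a
theory exactly when the structure it codes does.

Since `T'` is inductive, its models are those satisfying open conditions `φ < ε` with `φ ∈ Π₂`.
By compactness (Łoś's theorem for ultraproducts) each such condition already follows from a
closed consequence `φ ≤ q` of `T'` with `q < ε` rational. Hence `𝔖_{T'}` is the countable
intersection of the sets `{x | φ^x ≤ q}` over the closed `Π₂` consequences of `T'`. Each of these
is `G_δ`: a `Σ₁` value is an infimum of quantifier-free values, hence upper semicontinuous on `𝔖`,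
so its sublevel sets are `G_δ`, and a `sup` over the dense set is a countable intersection.
-/

open Filter Topology Set

namespace CFormula

variable {S : CSig}

def toNat : ∀ {n : ℕ}, CFormula S n → ℕ
  | _, dst a b => Nat.pair 0 (Nat.pair a b)
  | _, rel i ts => Nat.pair 1 (Nat.pair i (Encodable.encode (List.ofFn fun j => (ts j : ℕ))))
  | _, const q => Nat.pair 2 (Encodable.encode q)
  | _, fmin φ ψ => Nat.pair 3 (Nat.pair φ.toNat ψ.toNat)
  | _, fmax φ ψ => Nat.pair 4 (Nat.pair φ.toNat ψ.toNat)
  | _, neg φ => Nat.pair 5 φ.toNat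
  | _, addT φ ψ => Nat.pair 6 (Nat.pair φ.toNat ψ.toNat)
  | _, subT φ ψ => Nat.pair 7 (Nat.pair φ.toNat ψ.toNat)
  | _, absd φ ψ => Nat.pair 8 (Nat.pair φ.toNat ψ.toNat)
  | _, scale q φ => Nat.pair 9 (Nat.pair (Encodable.encode q) φ.toNat)
  | _, inf φ => Nat.pair 10 φ.toNat
  | _, sup φ => Nat.pair 11 φ.toNat

theorem toNat_injective {n : ℕ} : Function.Injective (toNat : CFormula S n → ℕ) := by
  intro φ ψ h
  induction φ with
  | rel i ts =>
    cases ψ <;> simp only [toNat, Nat.pair_eq_pair, Encodable.encode_inj] at h <;> try simp at h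
    obtain ⟨rfl, h⟩ := h
    simpa [funext_iff, Fin.val_inj] using List.ofFn_inj.mp h
  | _ => cases ψ <;> simp_all [toNat, Nat.pair_eq_pair, Fin.val_inj] <;> grind

instance {n : ℕ} : Countable (CFormula S n) := toNat_injective.countable

end CFormula

theorem abs_ciInf_sub_ciInf_le {ι : Sort*} [Nonempty ι] {f g : ι → ℝ} {ε : ℝ}
    (hf : BddBelow (range f)) (hg : BddBelow (range g)) (h : ∀ i, |f i - g i| ≤ ε) :
    |(⨅ i, f i) - ⨅ i, g i| ≤ ε := by
  have hfg : (⨅ i, f i) - ε ≤ ⨅ i, g i :=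
    le_ciInf fun i => by linarith [ciInf_le hf i, (abs_le.1 (h i)).2]
  have hgf : (⨅ i, g i) - ε ≤ ⨅ i, f i :=
    le_ciInf fun i => by linarith [ciInf_le hg i, (abs_le.1 (h i)).1]
  exact abs_sub_le_iff.2 ⟨by linarith, by linarith⟩

theorem abs_ciSup_sub_ciSup_le {ι : Sort*} [Nonempty ι] {f g : ι → ℝ} {ε : ℝ}
    (hf : BddAbove (range f)) (hg : BddAbove (range g)) (h : ∀ i, |f i - g i| ≤ ε) :
    |(⨆ i, f i) - ⨆ i, g i| ≤ ε := by
  have hfg : (⨆ i, f i) ≤ (⨆ i, g i) + ε :=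
    ciSup_le fun i => by linarith [le_ciSup hg i, (abs_le.1 (h i)).2]
  have hgf : (⨆ i, g i) ≤ (⨆ i, f i) + ε :=
    ciSup_le fun i => by linarith [le_ciSup hf i, (abs_le.1 (h i)).1]
  exact abs_sub_le_iff.2 ⟨by linarith, by linarith⟩

theorem Fin.dist_snoc_snoc_le {X : Type*} [PseudoMetricSpace X] {n : ℕ} (v w : Fin n → X)
    (x : X) : dist (Fin.snoc v x : Fin (n + 1) → X) (Fin.snoc w x) ≤ dist v w := by
  refine (dist_pi_le_iff dist_nonneg).2 fun i => ?_
  induction i using Fin.lastCases with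
  | last => simp
  | cast j => simpa using dist_le_pi_dist v w j

theorem UniformContinuous.ciInf_snoc {X : Type*} [PseudoMetricSpace X] [Nonempty X] {n : ℕ}
    {f : (Fin (n + 1) → X) → ℝ} (hf : UniformContinuous f) (hb : BddBelow (range f)) :
    UniformContinuous fun v : Fin n → X => ⨅ x, f (Fin.snoc v x) := by
  rw [Metric.uniformContinuous_iff_le] at hf ⊢
  intro ε hε
  obtain ⟨δ, hδ, hfδ⟩ := hf ε hε
  refine ⟨δ, hδ, fun v w hvw => ?_⟩
  rw [Real.dist_eq]
  refine abs_ciInf_sub_ciInf_le (hb.mono (range_comp_subset_range _ f))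
    (hb.mono (range_comp_subset_range _ f)) fun x => ?_
  exact Real.dist_eq _ _ ▸ hfδ ((Fin.dist_snoc_snoc_le v w x).trans hvw)

theorem UniformContinuous.ciSup_snoc {X : Type*} [PseudoMetricSpace X] [Nonempty X] {n : ℕ}
    {f : (Fin (n + 1) → X) → ℝ} (hf : UniformContinuous f) (hb : BddAbove (range f)) :
    UniformContinuous fun v : Fin n → X => ⨆ x, f (Fin.snoc v x) := by
  rw [Metric.uniformContinuous_iff_le] at hf ⊢
  intro ε hε
  obtain ⟨δ, hδ, hfδ⟩ := hf ε hε
  refine ⟨δ, hδ, fun v w hvw => ?_⟩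
  rw [Real.dist_eq]
  refine abs_ciSup_sub_ciSup_le (hb.mono (range_comp_subset_range _ f))
    (hb.mono (range_comp_subset_range _ f)) fun x => ?_
  exact Real.dist_eq _ _ ▸ hfδ ((Fin.dist_snoc_snoc_le v w x).trans hvw)

section DenseRange

variable {α β γ : Type*} [TopologicalSpace β] {e : α → β}

theorem DenseRange.ciInf_comp [ConditionallyCompleteLinearOrder γ] [TopologicalSpace γ]
    [ClosedIciTopology γ] (he : DenseRange e) {f : β → γ} (hf : Continuous f) :
    ⨅ a, f (e a) = ⨅ b, f b := by
  rw [← iInf_range']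
  exact he.ciInf' hf

theorem DenseRange.ciSup_comp [ConditionallyCompleteLinearOrder γ] [TopologicalSpace γ]
    [ClosedIicTopology γ] (he : DenseRange e) {f : β → γ} (hf : Continuous f) :
    ⨆ a, f (e a) = ⨆ b, f b := by
  rw [← iSup_range']
  exact he.ciSup' hf

theorem DenseRange.subset_of_isOpen_of_isClosed (he : DenseRange e) {s t : Set β}
    (hs : IsOpen s) (ht : IsClosed t) (h : ∀ a, e a ∈ s → e a ∈ t) : s ⊆ t :=
  (he.open_subset_closure_inter hs).trans <|
    closure_minimal (by rintro _ ⟨hs, a, rfl⟩; exact h a hs) ht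

end DenseRange

section Limits

variable {ι : Type*} {X : ι → Type*} [∀ i, Nonempty (X i)] {α : Type*}
  [ConditionallyCompleteLinearOrder α] [TopologicalSpace α] [OrderTopology α] [DenselyOrdered α]
  {l : Filter ι} [l.NeBot] {f : ∀ i, X i → α} {L : (∀ i, X i) → α} {a : α}

theorem ciInf_eq_of_tendsto (hf : ∀ i, BddBelow (range (f i)))
    (hL : ∀ g, Tendsto (fun i => f i (g i)) l (𝓝 (L g)))
    (ha : Tendsto (fun i => ⨅ x, f i x) l (𝓝 a)) : ⨅ g, L g = a := by
  have ha_le : ∀ g, a ≤ L g := fun g =>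
    le_of_tendsto_of_tendsto' ha (hL g) fun i => ciInf_le (hf i) (g i)
  refine le_antisymm (le_of_forall_gt_imp_ge_of_dense fun c hc => ?_) (le_ciInf ha_le)
  have hwit : ∀ i, ∃ x, (⨅ x, f i x) < c → f i x < c := fun i => by
    by_cases hi : (⨅ x, f i x) < c
    · exact (exists_lt_of_ciInf_lt hi).imp fun x hx _ => hx
    · exact ⟨Classical.arbitrary _, fun h => absurd h hi⟩
  choose g hg using hwit
  calc ⨅ g, L g ≤ L g := ciInf_le ⟨a, forall_mem_range.2 ha_le⟩ g
    _ ≤ c := le_of_tendsto (hL g) ((ha.eventually (gt_mem_nhds hc)).mono fun i hi => (hg i hi).le)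

theorem ciSup_eq_of_tendsto (hf : ∀ i, BddAbove (range (f i)))
    (hL : ∀ g, Tendsto (fun i => f i (g i)) l (𝓝 (L g)))
    (ha : Tendsto (fun i => ⨆ x, f i x) l (𝓝 a)) : ⨆ g, L g = a :=
  ciInf_eq_of_tendsto (α := αᵒᵈ) hf hL ha

end Limits

theorem Ultrafilter.tendsto_limUnder_of_isCompact {ι X : Type*} [TopologicalSpace X] [Nonempty X]
    (U : Ultrafilter ι) {s : Set X} (hs : IsCompact s) {r : ι → X} (hr : ∀ i, r i ∈ s) :
    Tendsto r U (𝓝 (limUnder (U : Filter ι) r)) := by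
  obtain ⟨x, -, hx⟩ := hs.ultrafilter_le_nhds (U.map r)
    (tendsto_principal.2 (.of_forall hr))
  exact tendsto_nhds_limUnder ⟨x, hx⟩

structure CPreStructure (S : CSig) where
  Carrier : Type
  pm : PseudoMetricSpace Carrier
  nonempty : Nonempty Carrier
  bounded : ∀ x y : Carrier, @dist Carrier pm.toDist x y ≤ 1
  rel : ∀ i, (Fin (S.arity i) → Carrier) → ℝ
  rel_nonneg : ∀ i v, 0 ≤ rel i v
  rel_le_one : ∀ i v, rel i v ≤ 1
  rel_uc : ∀ i (ε : ℝ), 0 < ε → ∀ v w,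
    (∀ j, @dist Carrier pm.toDist (v j) (w j) < S.modulus i ε) → |rel i v - rel i w| ≤ ε

attribute [instance] CPreStructure.pm CPreStructure.nonempty

noncomputable def CPreStructure.eval {S : CSig} (P : CPreStructure S) :
    ∀ (n : ℕ), CFormula S n → (Fin n → P.Carrier) → ℝ
  | _, .dst a b, v => dist (v a) (v b)
  | _, .rel i ts, v => P.rel i fun j => v (ts j)
  | _, .const q, _ => clampQ q
  | n, .fmin φ ψ, v => min (P.eval n φ v) (P.eval n ψ v)
  | n, .fmax φ ψ, v => max (P.eval n φ v) (P.eval n ψ v)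
  | n, .neg φ, v => 1 - P.eval n φ v
  | n, .addT φ ψ, v => min 1 (P.eval n φ v + P.eval n ψ v)
  | n, .subT φ ψ, v => max 0 (P.eval n φ v - P.eval n ψ v)
  | n, .absd φ ψ, v => |P.eval n φ v - P.eval n ψ v|
  | n, .scale q φ, v => clampQ q * P.eval n φ v
  | n, .inf φ, v => ⨅ x : P.Carrier, P.eval (n + 1) φ (Fin.snoc v x)
  | n, .sup φ, v => ⨆ x : P.Carrier, P.eval (n + 1) φ (Fin.snoc v x)

theorem clampQ_mem_Icc (q : ℚ) : clampQ q ∈ Icc (0 : ℝ) 1 :=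
  ⟨le_max_left _ _, max_le zero_le_one (min_le_left _ _)⟩

namespace CPreStructure

variable {S : CSig} (P : CPreStructure S)

theorem eval_mem_Icc {n : ℕ} (φ : CFormula S n) (v : Fin n → P.Carrier) :
    P.eval n φ v ∈ Icc 0 1 := by
  induction φ with
  | dst a b => exact ⟨dist_nonneg, P.bounded _ _⟩
  | rel i ts => exact ⟨P.rel_nonneg _ _, P.rel_le_one _ _⟩
  | const q => exact clampQ_mem_Icc q
  | scale q φ ih =>
    obtain ⟨h0, h1⟩ := clampQ_mem_Icc q
    exact ⟨mul_nonneg h0 (ih v).1, mul_le_one₀ h1 (ih v).1 (ih v).2⟩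
  | inf φ ih =>
    refine ⟨Real.iInf_nonneg fun x => (ih _).1, ?_⟩
    exact (ciInf_le ⟨0, forall_mem_range.2 fun x => (ih _).1⟩ (Classical.arbitrary _)).trans
      (ih _).2
  | sup φ ih =>
    refine ⟨?_, Real.iSup_le (fun x => (ih _).2) zero_le_one⟩
    exact (ih _).1.trans
      (le_ciSup ⟨1, forall_mem_range.2 fun x => (ih _).2⟩ (Classical.arbitrary P.Carrier))
  | _ =>
    simp only [eval, mem_Icc] at *
    refine ⟨?_, ?_⟩ <;> grind [abs_le]

theorem bddBelow_range_eval {n : ℕ} (φ : CFormula S n) : BddBelow (range (P.eval n φ)) :=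
  ⟨0, forall_mem_range.2 fun v => (P.eval_mem_Icc φ v).1⟩

theorem bddAbove_range_eval {n : ℕ} (φ : CFormula S n) : BddAbove (range (P.eval n φ)) :=
  ⟨1, forall_mem_range.2 fun v => (P.eval_mem_Icc φ v).2⟩

theorem uniformContinuous_rel (i : ℕ) : UniformContinuous (P.rel i) := by
  refine Metric.uniformContinuous_iff.2 fun ε hε =>
    ⟨S.modulus i (ε / 2), S.modulus_pos i _ (half_pos hε), fun v w hvw => ?_⟩
  rw [Real.dist_eq]
  exact (P.rel_uc i _ (half_pos hε) v w fun j => (dist_le_pi_dist v w j).trans_lt hvw).trans_lt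
    (half_lt_self hε)

theorem uniformContinuous_eval {n : ℕ} (φ : CFormula S n) : UniformContinuous (P.eval n φ) := by
  induction φ with
  | dst a b => exact (Pi.uniformContinuous_proj _ a).dist (Pi.uniformContinuous_proj _ b)
  | rel i ts =>
    exact (P.uniformContinuous_rel i).comp
      (uniformContinuous_pi.2 fun j => Pi.uniformContinuous_proj _ (ts j))
  | const q => exact uniformContinuous_const
  | fmin φ ψ ihφ ihψ => exact lipschitzWith_min.uniformContinuous.comp (ihφ.prodMk ihψ)
  | fmax φ ψ ihφ ihψ => exact lipschitzWith_max.uniformContinuous.comp (ihφ.prodMk ihψ)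
  | neg φ ih => exact uniformContinuous_const.sub ih
  | addT φ ψ ihφ ihψ =>
    exact lipschitzWith_min.uniformContinuous.comp (uniformContinuous_const.prodMk (ihφ.add ihψ))
  | subT φ ψ ihφ ihψ =>
    exact lipschitzWith_max.uniformContinuous.comp (uniformContinuous_const.prodMk (ihφ.sub ihψ))
  | absd φ ψ ihφ ihψ => exact ihφ.dist ihψ
  | scale q φ ih => exact ih.const_smul (clampQ q)
  | inf φ ih => exact ih.ciInf_snoc (P.bddBelow_range_eval φ)
  | sup φ ih => exact ih.ciSup_snoc (P.bddAbove_range_eval φ)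

end CPreStructure

namespace CStructure

variable {S : CSig} (M : CStructure S)

def toPre : CPreStructure S :=
  { M with pm := M.metric.toPseudoMetricSpace }

theorem eval_toPre {n : ℕ} (φ : CFormula S n) (v : Fin n → M.Carrier) :
    M.toPre.eval n φ v = M.eval n φ v := by
  induction φ with
  | inf φ ih => exact iInf_congr fun x => ih _
  | sup φ ih => exact iSup_congr fun x => ih _
  | _ => simp_all [CPreStructure.eval, CStructure.eval] <;> rfl

theorem eval_mem_Icc {n : ℕ} (φ : CFormula S n) (v : Fin n → M.Carrier) :
    M.eval n φ v ∈ Icc 0 1 :=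
  M.eval_toPre φ v ▸ M.toPre.eval_mem_Icc φ v

theorem uniformContinuous_eval {n : ℕ} (φ : CFormula S n) : UniformContinuous (M.eval n φ) :=
  funext (M.eval_toPre φ) ▸ M.toPre.uniformContinuous_eval φ

end CStructure

namespace UniformSpace.Completion

variable {ι α : Type*} [PseudoMetricSpace α]

theorem isUniformInducing_piMap_coe [Fintype ι] :
    IsUniformInducing (Pi.map fun _ : ι => ((↑) : α → Completion α)) :=
  (Isometry.piMap _ fun _ => coe_isometry).isUniformInducing

theorem denseRange_piMap_coe : DenseRange (Pi.map fun _ : ι => ((↑) : α → Completion α)) :=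
  DenseRange.piMap fun _ => denseRange_coe

end UniformSpace.Completion

namespace CPreStructure

open UniformSpace

variable {S : CSig} (P : CPreStructure S)

noncomputable def completionRel (i : ℕ) : (Fin (S.arity i) → Completion P.Carrier) → ℝ :=
  (Completion.isUniformInducing_piMap_coe.isDenseInducing Completion.denseRange_piMap_coe).extend
    (P.rel i)

theorem completionRel_coe (i : ℕ) (v : Fin (S.arity i) → P.Carrier) :
    P.completionRel i (fun j => v j) = P.rel i v :=
  uniformly_extend_of_ind Completion.isUniformInducing_piMap_coe
    Completion.denseRange_piMap_coe (P.uniformContinuous_rel i) v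

theorem uniformContinuous_completionRel (i : ℕ) : UniformContinuous (P.completionRel i) :=
  uniformContinuous_uniformly_extend Completion.isUniformInducing_piMap_coe
    Completion.denseRange_piMap_coe (P.uniformContinuous_rel i)

theorem completionRel_mem_Icc (i : ℕ) (w : Fin (S.arity i) → Completion P.Carrier) :
    P.completionRel i w ∈ Icc 0 1 :=
  Completion.denseRange_piMap_coe.induction_on w
    (isClosed_Icc.preimage (P.uniformContinuous_completionRel i).continuous) fun v =>
      (P.completionRel_coe i v).symm ▸ ⟨P.rel_nonneg i v, P.rel_le_one i v⟩

theorem completionRel_uc (i : ℕ) (ε : ℝ) (hε : 0 < ε)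
    (w w' : Fin (S.arity i) → Completion P.Carrier)
    (h : ∀ j, dist (w j) (w' j) < S.modulus i ε) :
    |P.completionRel i w - P.completionRel i w'| ≤ ε := by
  have hδ := S.modulus_pos i ε hε
  have hF := (P.uniformContinuous_completionRel i).continuous
  have key : {p : (Fin (S.arity i) → Completion P.Carrier) × _ | dist p.1 p.2 < S.modulus i ε} ⊆
      {p | |P.completionRel i p.1 - P.completionRel i p.2| ≤ ε} := by
    refine (Completion.denseRange_piMap_coe.prodMap
      Completion.denseRange_piMap_coe).subset_of_isOpen_of_isClosed
      (isOpen_lt continuous_dist continuous_const)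
      (isClosed_le ((hF.comp continuous_fst).sub (hF.comp continuous_snd)).abs continuous_const)
      ?_
    rintro ⟨v, v'⟩ (hvv' : dist (fun j => (v j : Completion P.Carrier)) (fun j => v' j) < _)
    show |P.completionRel i (fun j => v j) - P.completionRel i (fun j => v' j)| ≤ ε
    rw [completionRel_coe, completionRel_coe]
    refine P.rel_uc i ε hε v v' fun j => ?_
    rw [← Completion.dist_eq]
    exact (dist_pi_lt_iff hδ).1 hvv' j
  have hw : dist w w' < S.modulus i ε := (dist_pi_lt_iff hδ).2 h
  exact key (a := (w, w')) hw

noncomputable def completion : CStructure S where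
  Carrier := Completion P.Carrier
  metric := inferInstance
  nonempty := ⟨(Classical.arbitrary P.Carrier : Completion P.Carrier)⟩
  complete := inferInstance
  bounded x y := Completion.induction_on₂ x y (isClosed_le (by fun_prop) continuous_const)
    fun a b => (Completion.dist_eq a b).symm ▸ P.bounded a b
  rel := P.completionRel
  rel_nonneg i w := (P.completionRel_mem_Icc i w).1
  rel_le_one i w := (P.completionRel_mem_Icc i w).2
  rel_uc := P.completionRel_uc

theorem eval_completion {n : ℕ} (φ : CFormula S n) (v : Fin n → P.Carrier) :
    P.completion.eval n φ (fun k => (v k : Completion P.Carrier)) = P.eval n φ v := by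
  induction φ with
  | dst a b => exact Completion.dist_eq _ _
  | rel i ts => exact P.completionRel_coe i _
  | inf φ ih =>
    have hcont : Continuous fun x =>
        P.completion.eval _ φ (Fin.snoc (fun k => (v k : Completion P.Carrier)) x) :=
      (P.completion.uniformContinuous_eval φ).continuous.comp
        (continuous_const.finSnoc continuous_id)
    refine (Completion.denseRange_coe.ciInf_comp hcont).symm.trans (iInf_congr fun a => ?_)
    rw [← ih (Fin.snoc v a)]
    exact congrArg _ (Fin.comp_snoc ((↑) : P.Carrier → Completion P.Carrier) v a).symm
  | sup φ ih =>
    have hcont : Continuous fun x =>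
        P.completion.eval _ φ (Fin.snoc (fun k => (v k : Completion P.Carrier)) x) :=
      (P.completion.uniformContinuous_eval φ).continuous.comp
        (continuous_const.finSnoc continuous_id)
    refine (Completion.denseRange_coe.ciSup_comp hcont).symm.trans (iSup_congr fun a => ?_)
    rw [← ih (Fin.snoc v a)]
    exact congrArg _ (Fin.comp_snoc ((↑) : P.Carrier → Completion P.Carrier) v a).symm
  | _ => simp_all [eval, CStructure.eval]

theorem sval_completion (φ : CSentence S) : P.completion.sval φ = P.eval 0 φ Fin.elim0 := by
  rw [← eval_completion, CStructure.sval]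
  congr
  exact funext fun i => i.elim0

end CPreStructure

theorem UpperSemicontinuous.isGδ_setOf_le {X : Type*} [TopologicalSpace X] {f : X → ℝ}
    (hf : UpperSemicontinuous f) (q : ℝ) : IsGδ {x | f x ≤ q} := by
  have : {x | f x ≤ q} = ⋂ m : ℕ, f ⁻¹' Iio (q + 1 / (m + 1)) := by
    ext x
    simp only [mem_iInter, mem_preimage, mem_Iio]
    change f x ≤ q ↔ _
    refine ⟨fun h m => h.trans_lt (lt_add_of_pos_right _ Nat.one_div_pos_of_nat), fun h => ?_⟩
    refine le_of_forall_pos_lt_add fun ε hε => ?_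
    obtain ⟨m, hm⟩ := exists_nat_one_div_lt hε
    exact (h m).trans (add_lt_add_right hm q)
  rw [this]
  exact .iInter fun m => (hf.isOpen_preimage _).isGδ

namespace SCode

variable {S : CSig} (x : SCode S)

def toPre : CPreStructure S where
  Carrier := ℕ
  pm :=
    { dist := x.dd
      dist_self := x.dd_self
      dist_comm := x.dd_symm
      dist_triangle := x.dd_triangle }
  nonempty := ⟨0⟩
  bounded := x.dd_le_one
  rel := x.R
  rel_nonneg := x.R_nonneg
  rel_le_one := x.R_le_one
  rel_uc := x.R_uc

theorem eval_toPre {n : ℕ} (φ : CFormula S n) (v : Fin n → ℕ) :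
    x.toPre.eval n φ v = x.eval n φ v := by
  induction φ with
  | inf φ ih => exact iInf_congr fun k => ih _
  | sup φ ih => exact iSup_congr fun k => ih _
  | _ => simp_all [CPreStructure.eval, SCode.eval] <;> rfl

theorem eval_mem_Icc {n : ℕ} (φ : CFormula S n) (v : Fin n → ℕ) : x.eval n φ v ∈ Icc 0 1 :=
  x.eval_toPre φ v ▸ x.toPre.eval_mem_Icc φ v

noncomputable def toStructure : CStructure S := x.toPre.completion

theorem sval_toStructure (φ : CSentence S) : x.toStructure.sval φ = x.sval φ :=
  (x.toPre.sval_completion φ).trans (x.eval_toPre φ _)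

theorem satT_toStructure_iff (T : CTheory S) : x.toStructure.SatT T ↔ x.SatT T := by
  simp only [CStructure.SatT, SCode.SatT, sval_toStructure]

theorem upperSemicontinuous_eval_of_isQF {n : ℕ} {φ : CFormula S n} (hφ : IsQF φ)
    (a : Fin n → ℕ) : UpperSemicontinuous fun x : SCode S => x.eval n φ a := by
  refine upperSemicontinuous_iff_isOpen_preimage.2 fun r => ?_
  rcases le_or_gt r 0 with hr | hr
  · convert isOpen_empty
    exact eq_empty_of_forall_notMem fun x hx => (hr.trans (x.eval_mem_Icc φ a).1).not_gt hx
  · exact TopologicalSpace.GenerateOpen.basic _ ⟨n, φ, a, r, hφ, hr, rfl⟩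

theorem upperSemicontinuous_eval_of_isSigmaN_one {n : ℕ} {φ : CFormula S n}
    (hφ : IsSigmaN S 1 φ) (a : Fin n → ℕ) :
    UpperSemicontinuous fun x : SCode S => x.eval n φ a := by
  induction hφ with
  | base hφ => exact upperSemicontinuous_eval_of_isQF hφ a
  | step _ ih =>
    exact upperSemicontinuous_ciInf
      (fun x => ⟨0, forall_mem_range.2 fun k => (x.eval_mem_Icc _ _).1⟩) fun k => ih _

theorem isGδ_setOf_eval_le_of_isPiN_two {n : ℕ} {φ : CFormula S n} (hφ : IsPiN S 2 φ)
    (a : Fin n → ℕ) (q : ℝ) : IsGδ {x : SCode S | x.eval n φ a ≤ q} := by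
  induction hφ with
  | base hφ => exact (upperSemicontinuous_eval_of_isSigmaN_one hφ a).isGδ_setOf_le q
  | @step n φ _ ih =>
    have : {x : SCode S | x.eval n φ.sup a ≤ q} =
        ⋂ k, {x | x.eval (n + 1) φ (Fin.snoc a k) ≤ q} := by
      ext x
      rw [mem_iInter]
      exact ciSup_le_iff ⟨1, forall_mem_range.2 fun k => (x.eval_mem_Icc φ _).2⟩
    rw [this]
    exact .iInter fun k => ih _

end SCode

namespace CStructure

variable {S : CSig} {ι : Type} (U : Ultrafilter ι) (M : ι → CStructure S)

theorem tendsto_limUnder_dist (f g : ∀ i, (M i).Carrier) :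
    Tendsto (fun i => dist (f i) (g i)) U
      (𝓝 (limUnder (U : Filter ι) fun i => dist (f i) (g i))) :=
  U.tendsto_limUnder_of_isCompact isCompact_Icc fun i => ⟨dist_nonneg, (M i).bounded _ _⟩

theorem tendsto_limUnder_rel (k : ℕ) (f : Fin (S.arity k) → ∀ i, (M i).Carrier) :
    Tendsto (fun i => (M i).rel k fun j => f j i) U
      (𝓝 (limUnder (U : Filter ι) fun i => (M i).rel k fun j => f j i)) :=
  U.tendsto_limUnder_of_isCompact isCompact_Icc fun i =>
    ⟨(M i).rel_nonneg _ _, (M i).rel_le_one _ _⟩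

/-- The metric ultraproduct of the `M i`, before identifying points at distance `0` and
completing. -/
noncomputable def ultraproduct : CPreStructure S where
  Carrier := ∀ i, (M i).Carrier
  pm :=
    { dist := fun f g => limUnder (U : Filter ι) fun i => dist (f i) (g i)
      dist_self := fun f => by simpa only [dist_self] using tendsto_const_nhds.limUnder_eq
      dist_comm := fun f g => by simp only [dist_comm]
      dist_triangle := fun f g h =>
        le_of_tendsto_of_tendsto' (tendsto_limUnder_dist U M f h)
          ((tendsto_limUnder_dist U M f g).add (tendsto_limUnder_dist U M g h))
          fun i => dist_triangle _ _ _ }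
  nonempty := ⟨fun i => Classical.arbitrary _⟩
  bounded f g :=
    le_of_tendsto (tendsto_limUnder_dist U M f g) (.of_forall fun i => (M i).bounded _ _)
  rel k f := limUnder (U : Filter ι) fun i => (M i).rel k fun j => f j i
  rel_nonneg k f :=
    ge_of_tendsto (tendsto_limUnder_rel U M k f) (.of_forall fun i => (M i).rel_nonneg _ _)
  rel_le_one k f :=
    le_of_tendsto (tendsto_limUnder_rel U M k f) (.of_forall fun i => (M i).rel_le_one _ _)
  rel_uc k ε hε f g h := by
    have hclose : ∀ᶠ i in (U : Filter ι), ∀ j, dist (f j i) (g j i) < S.modulus k ε :=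
      eventually_all.2 fun j => (tendsto_limUnder_dist U M (f j) (g j)).eventually_lt_const (h j)
    exact le_of_tendsto ((tendsto_limUnder_rel U M k f).sub (tendsto_limUnder_rel U M k g)).abs
      (hclose.mono fun i hi => (M i).rel_uc k ε hε _ _ hi)

theorem tendsto_eval_ultraproduct {n : ℕ} (φ : CFormula S n) (v : Fin n → ∀ i, (M i).Carrier) :
    Tendsto (fun i => (M i).eval n φ fun k => v k i) U (𝓝 ((ultraproduct U M).eval n φ v)) := by
  induction φ with
  | dst a b => exact tendsto_limUnder_dist U M (v a) (v b)
  | rel k ts => exact tendsto_limUnder_rel U M k fun j => v (ts j)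
  | const q => exact tendsto_const_nhds
  | fmin φ ψ ihφ ihψ => exact (ihφ v).min (ihψ v)
  | fmax φ ψ ihφ ihψ => exact (ihφ v).max (ihψ v)
  | neg φ ih => exact tendsto_const_nhds.sub (ih v)
  | addT φ ψ ihφ ihψ => exact tendsto_const_nhds.min ((ihφ v).add (ihψ v))
  | subT φ ψ ihφ ihψ => exact tendsto_const_nhds.max ((ihφ v).sub (ihψ v))
  | absd φ ψ ihφ ihψ => exact ((ihφ v).sub (ihψ v)).abs
  | scale q φ ih => exact tendsto_const_nhds.mul (ih v)
  | inf φ ih =>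
    have hI := U.tendsto_limUnder_of_isCompact isCompact_Icc fun i =>
      (M i).eval_mem_Icc φ.inf fun k => v k i
    have hL : ∀ g, Tendsto (fun i => (M i).eval _ φ (Fin.snoc (fun k => v k i) (g i))) U
        (𝓝 ((ultraproduct U M).eval _ φ (Fin.snoc v g))) := fun g =>
      (ih (Fin.snoc v g)).congr fun i => congrArg _ (Fin.comp_snoc (fun h => h i) v g)
    rw [← ciInf_eq_of_tendsto
      (fun i => ⟨0, forall_mem_range.2 fun x => ((M i).eval_mem_Icc φ _).1⟩) hL hI] at hI
    exact hI
  | sup φ ih =>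
    have hI := U.tendsto_limUnder_of_isCompact isCompact_Icc fun i =>
      (M i).eval_mem_Icc φ.sup fun k => v k i
    have hL : ∀ g, Tendsto (fun i => (M i).eval _ φ (Fin.snoc (fun k => v k i) (g i))) U
        (𝓝 ((ultraproduct U M).eval _ φ (Fin.snoc v g))) := fun g =>
      (ih (Fin.snoc v g)).congr fun i => congrArg _ (Fin.comp_snoc (fun h => h i) v g)
    rw [← ciSup_eq_of_tendsto
      (fun i => ⟨1, forall_mem_range.2 fun x => ((M i).eval_mem_Icc φ _).2⟩) hL hI] at hI
    exact hI

theorem tendsto_sval_ultraproduct (φ : CSentence S) :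
    Tendsto (fun i => (M i).sval φ) U (𝓝 ((ultraproduct U M).completion.sval φ)) := by
  rw [CPreStructure.sval_completion]
  exact (tendsto_eval_ultraproduct U M φ Fin.elim0).congr fun i =>
    congrArg ((M i).eval 0 φ) (funext fun k => k.elim0)

theorem satT_completion_ultraproduct {T : CTheory S} (hM : ∀ i, (M i).SatT T) :
    (ultraproduct U M).completion.SatT T := fun c hc =>
  le_of_tendsto (tendsto_sval_ultraproduct U M c.1) (.of_forall fun i => hM i c hc)

end CStructure

theorem exists_lt_entails_of_entailsOpen {S : CSig} {T : CTheory S} {c : CSentence S × ℝ}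
    (h : EntailsOpen T c) : ∃ r < c.2, Entails T (c.1, r) := by
  by_contra! hc
  have hwit : ∀ m : ℕ, ∃ M : CStructure S, M.SatT T ∧ c.2 - 1 / (m + 1) < M.sval c.1 := fun m => by
    simpa [Entails] using hc (c.2 - 1 / (m + 1)) (sub_lt_self _ Nat.one_div_pos_of_nat)
  choose M hMT hMc using hwit
  let U := hyperfilter ℕ
  have hlim : Tendsto (fun m : ℕ => c.2 - 1 / ((m : ℝ) + 1)) U (𝓝 c.2) := by
    have := tendsto_one_div_add_atTop_nhds_zero_nat.const_sub c.2
    rw [sub_zero] at this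
    exact this.mono_left (hyperfilter_le_cofinite.trans Nat.cofinite_eq_atTop.le)
  have hlim_le : c.2 ≤ (CStructure.ultraproduct U M).completion.sval c.1 :=
    le_of_tendsto_of_tendsto' hlim (CStructure.tendsto_sval_ultraproduct U M c.1) fun m =>
      (hMc m).le
  exact (h _ (CStructure.satT_completion_ultraproduct U M hMT)).not_ge hlim_le

/-- For an inductive theory `T'`, the set `𝔖_{T'}` is a `G_δ` subset of
the Polish space `𝔖`. -/
theorem ST_isGdelta_of_inductive (S : CSig) (T' : CTheory S) (hT' : IsTheory T')
    (hind : IsInductiveTheory T') :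
    IsGδ {x : SCode S | x.SatT T'} := by
  obtain ⟨A, hA, hax⟩ := hind
  let D : Set (CSentence S × ℚ) := {p | IsPiN S 2 p.1 ∧ Entails T' (p.1, p.2)}
  have hD : {x : SCode S | x.SatT T'} = ⋂ p ∈ D, {x | x.sval p.1 ≤ (p.2 : ℝ)} := by
    ext x
    simp only [mem_iInter₂]
    refine ⟨fun hx p hp => hx _ (hT'.2 _ hp.2), fun hx => ?_⟩
    show x.SatT T'
    rw [← SCode.satT_toStructure_iff, hax]
    intro c hc
    obtain ⟨r, hr, hent⟩ := exists_lt_entails_of_entailsOpen fun M hM => (hax M).1 hM c hc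
    obtain ⟨q, hrq, hqc⟩ := exists_rat_btwn hr
    rw [SCode.sval_toStructure]
    exact (hx (c.1, q) ⟨(hA c hc).1, fun M hM => (hent M hM).trans hrq.le⟩).trans_lt hqc
  rw [hD]
  exact .biInter (to_countable D) fun p hp => SCode.isGδ_setOf_eval_le_of_isPiN_two hp.1 _ _
end

section
/- A complete separable metric space M of diameter ≤ 1 is existentially closed among metric spaces of diameter ≤ 1 — meaning: for every metric space N ⊇ M of diameter ≤ 1, every point b ∈ N, every finite tuple a₁, …, aₙ ∈ M and every ε > 0 there exists y ∈ M with |d_M(y,aᵢ) − d_N(b,aᵢ)| ≤ ε for all i — if and only if M is isometric to the Urysohn space of diameter 1. -/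
open TopologicalSpace

/-- The set `Met₁` of all metrics on `ℕ` with values in `[0,1]`, inside the product
space `[0,1]^{ℕ×ℕ}`. -/
def Met1 : Set ((ℕ × ℕ) → Set.Icc (0 : ℝ) 1) :=
  {f | (∀ i, (f (i, i) : ℝ) = 0) ∧ (∀ i j, (f (i, j) : ℝ) = f (j, i)) ∧
    (∀ i j k, (f (i, k) : ℝ) ≤ f (i, j) + f (j, k)) ∧
    ∀ i j, i ≠ j → (0 : ℝ) < f (i, j)}

/-- The approximate one-point extension property for a metric space of diameter `≤ 1`:
every metrically consistent prescription of distances to a finite tuple is realized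
up to any `ε > 0`. -/
def ApproxExtProp (M : Type) [MetricSpace M] : Prop :=
  ∀ (n : ℕ) (a : Fin n → M) (r : Fin n → ℝ),
    (∀ i, 0 ≤ r i ∧ r i ≤ 1) →
    (∀ i j, |r i - r j| ≤ dist (a i) (a j) ∧ dist (a i) (a j) ≤ r i + r j) →
    ∀ ε : ℝ, 0 < ε → ∃ y : M, ∀ i, |dist y (a i) - r i| ≤ ε

/-- The exact one-point extension property for a metric space of diameter `≤ 1`:
every metrically consistent prescription of distances to a finite tuple is realized
exactly. -/
def ExactExtProp (M : Type) [MetricSpace M] : Prop :=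
  ∀ (n : ℕ) (a : Fin n → M) (r : Fin n → ℝ),
    (∀ i, 0 ≤ r i ∧ r i ≤ 1) →
    (∀ i j, |r i - r j| ≤ dist (a i) (a j) ∧ dist (a i) (a j) ≤ r i + r j) →
    ∃ y : M, ∀ i, dist y (a i) = r i

/-- `U` is (a copy of) the Urysohn space of diameter 1: a complete separable metric
space with all distances `≤ 1` satisfying the exact one-point extension property. -/
def IsUrysohn (U : Type) [MetricSpace U] : Prop :=
  CompleteSpace U ∧ SeparableSpace U ∧ (∀ x y : U, dist x y ≤ 1) ∧ ExactExtProp U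

/-!
If `M` is existentially closed, any metrically consistent prescription `r` of distances to
finitely many points `a i` is realized approximately: glue to `M` one new point at distance
`min (1, minᵢ (r i + d(x, a i)))` from each `x`, Katětov's extension of `r`.
Completeness upgrades this to exact realization. If `z` realizes `r` up to `δ`, then
prescribing in addition the distance `δ` to `z` is still consistent, so some `w` realizes `r`
up to `δ / 2` while lying within `3δ / 2` of `z`; iterating gives a Cauchy sequence whose
limit realizes `r`. Conversely, in a space with the exact extension property the distances
from an external point `b` can be realized exactly.
-/
theorem exists_le_zero_of_halving {X : Type*} [MetricSpace X] [CompleteSpace X] {F : X → ℝ}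
    (hF : Continuous F) {C : ℝ}
    (hstep : ∀ e > 0, ∀ x, F x ≤ e → ∃ y, F y ≤ e / 2 ∧ dist y x ≤ C * e)
    {x₀ : X} {e₀ : ℝ} (he₀ : 0 < e₀) (hx₀ : F x₀ ≤ e₀) : ∃ y, F y ≤ 0 := by
  choose! next hnext_le hnext_dist using hstep
  let u : ℕ → X := fun k => Nat.rec x₀ (fun k x => next (e₀ / 2 ^ k) x) k
  have hu : ∀ k, F (u k) ≤ e₀ / 2 ^ k := by
    intro k
    induction k with
    | zero => simpa [u] using hx₀
    | succ k ih =>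
      simpa [pow_succ, div_div] using hnext_le _ (by positivity) (u k) ih
  have hcauchy : CauchySeq u := by
    refine cauchySeq_of_le_geometric_two (C := 2 * C * e₀) fun k => ?_
    rw [dist_comm]
    have := hnext_dist _ (by positivity) (u k) (hu k)
    convert this using 1
    ring
  obtain ⟨y, hy⟩ := cauchySeq_tendsto_of_complete hcauchy
  refine ⟨y, le_of_tendsto_of_tendsto' ((hF.tendsto y).comp hy) ?_ hu⟩
  exact tendsto_const_nhds.div_atTop (tendsto_pow_atTop_atTop_of_one_lt one_lt_two)

section Katetov

variable {M : Type} [MetricSpace M]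

/-- Positivity makes the point added by `IsKatetov.extension` distinct from the points of `M`. -/
structure IsKatetov (f : M → ℝ) : Prop where
  pos : ∀ x, 0 < f x
  le_add_dist : ∀ x y, f x ≤ f y + dist x y
  dist_le_add : ∀ x y, dist x y ≤ f x + f y

noncomputable abbrev IsKatetov.extension {f : M → ℝ} (hf : IsKatetov f) :
    MetricSpace (Option M) where
  dist
    | some x, some y => dist x y
    | some x, none => f x
    | none, some y => f y
    | none, none => 0
  dist_self := by rintro (_ | x) <;> simp
  dist_comm := by rintro (_ | x) (_ | y) <;> simp [dist_comm]
  dist_triangle := by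
    rintro (_ | x) (_ | y) (_ | z) <;> dsimp only
    · norm_num
    · linarith [hf.pos z]
    · linarith [hf.pos y]
    · linarith [hf.le_add_dist z y, dist_comm z y]
    · linarith [hf.pos x]
    · exact hf.dist_le_add x z
    · linarith [hf.le_add_dist x y, dist_comm x y]
    · exact dist_triangle x y z
  eq_of_dist_eq_zero := by
    rintro (_ | x) (_ | y) h <;> dsimp only at h
    · rfl
    · exact absurd h (hf.pos y).ne'
    · exact absurd h (hf.pos x).ne'
    · exact congrArg some (eq_of_dist_eq_zero h)

theorem IsKatetov.exists_extension {f : M → ℝ} (hf : IsKatetov f) (hf₁ : ∀ x, f x ≤ 1)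
    (hM : ∀ x y : M, dist x y ≤ 1) :
    ∃ (N : Type) (_ : MetricSpace N) (g : M → N) (b : N),
      Isometry g ∧ (∀ p q : N, dist p q ≤ 1) ∧ ∀ x, dist b (g x) = f x := by
  let := hf.extension
  refine ⟨Option M, hf.extension, some, none, Isometry.of_dist_eq fun _ _ => rfl, ?_,
    fun _ => rfl⟩
  rintro (_ | x) (_ | y)
  exacts [zero_le_one, hf₁ y, hf₁ x, hM x y]

end Katetov

section Tuple

variable {M : Type} [MetricSpace M] {n : ℕ}

/-- `r` is a Katětov function on the points `a i`: the prescription `dist x (a i) = r i` is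
metrically consistent. -/
def IsKatetovTuple (a : Fin n → M) (r : Fin n → ℝ) : Prop :=
  ∀ i j, |r i - r j| ≤ dist (a i) (a j) ∧ dist (a i) (a j) ≤ r i + r j

theorem IsKatetovTuple.snoc {a : Fin n → M} {r : Fin n → ℝ} (h : IsKatetovTuple a r)
    {z : M} {s : ℝ} (hs : 0 ≤ s)
    (hz : ∀ i, |r i - s| ≤ dist (a i) z ∧ dist (a i) z ≤ r i + s) :
    IsKatetovTuple (Fin.snoc (α := fun _ => M) a z) (Fin.snoc (α := fun _ => ℝ) r s) := by
  intro i j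
  induction i using Fin.lastCases <;> induction j using Fin.lastCases <;>
    simp only [Fin.snoc_last, Fin.snoc_castSucc]
  · simp [hs]
  · rw [dist_comm, abs_sub_comm, add_comm]; exact hz _
  · exact hz _
  · exact h _ _

/-- Katětov's extension of `r` from the points `a i` to all of `M`, capped at `1`; the index
`none` provides the cap, which also keeps the infimum nonempty when `n = 0`. -/
noncomputable def katetovExtend (a : Fin n → M) (r : Fin n → ℝ) (x : M) : ℝ :=
  Finset.univ.inf' Finset.univ_nonempty fun i : Option (Fin n) =>
    i.elim 1 fun i => r i + dist x (a i)

variable {a : Fin n → M} {r : Fin n → ℝ}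

theorem katetovExtend_le (x : M) (i : Option (Fin n)) :
    katetovExtend a r x ≤ i.elim 1 fun i => r i + dist x (a i) :=
  Finset.inf'_le _ (Finset.mem_univ i)

theorem exists_katetovExtend_eq (x : M) :
    ∃ i : Option (Fin n), katetovExtend a r x = i.elim 1 fun i => r i + dist x (a i) := by
  obtain ⟨i, -, hi⟩ := Finset.exists_mem_eq_inf' Finset.univ_nonempty
    fun i : Option (Fin n) => i.elim 1 fun i => r i + dist x (a i)
  exact ⟨i, hi⟩

theorem katetovExtend_apply_tuple (h : IsKatetovTuple a r) (hr : ∀ i, r i ≤ 1) (i : Fin n) :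
    katetovExtend a r (a i) = r i := by
  refine le_antisymm (by simpa using katetovExtend_le (a := a) (r := r) (a i) (some i)) ?_
  refine Finset.le_inf' _ _ fun j _ => ?_
  cases j with
  | none => exact hr i
  | some j =>
    have := (abs_sub_le_iff.1 (h i j).1).1
    simp only [Option.elim_some]
    linarith

theorem isKatetov_katetovExtend (h : IsKatetovTuple a r) (hr : ∀ i, 0 < r i)
    (hM : ∀ x y : M, dist x y ≤ 1) : IsKatetov (katetovExtend a r) := by
  have pos : ∀ x, 0 < katetovExtend a r x := fun x =>
    (Finset.lt_inf'_iff _).2 fun i _ => by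
      cases i with
      | none => exact one_pos
      | some i => exact add_pos_of_pos_of_nonneg (hr i) dist_nonneg
  refine ⟨pos, fun x y => ?_, fun x y => ?_⟩
  · obtain ⟨j, hj⟩ := exists_katetovExtend_eq (a := a) (r := r) y
    refine (katetovExtend_le x j).trans ?_
    rw [hj]
    cases j with
    | none => exact le_add_of_nonneg_right dist_nonneg
    | some j => simpa [add_assoc, add_comm (dist x y)] using dist_triangle x y (a j)
  · obtain ⟨i, hi⟩ := exists_katetovExtend_eq (a := a) (r := r) x
    obtain ⟨j, hj⟩ := exists_katetovExtend_eq (a := a) (r := r) y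
    cases i with
    | none => simp only [Option.elim_none] at hi; linarith [hM x y, pos y]
    | some i =>
      cases j with
      | none => simp only [Option.elim_none] at hj; linarith [hM x y, pos x]
      | some j =>
        simp only [Option.elim_some] at hi hj
        linarith [dist_triangle4 x (a i) (a j) y, (h i j).2, dist_comm y (a j)]

end Tuple

def IsExistentiallyClosed (M : Type) [MetricSpace M] : Prop :=
  ∀ (N : Type) (_ : MetricSpace N), (∀ x y : N, dist x y ≤ 1) →
    ∀ g : M → N, Isometry g → ∀ b : N, ∀ (n : ℕ) (a : Fin n → M),
      ∀ ε : ℝ, 0 < ε → ∃ y : M, ∀ i, |dist y (a i) - dist b (g (a i))| ≤ ε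

section ExtensionProperties

variable {M : Type} [MetricSpace M]

theorem IsExistentiallyClosed.approxExtProp (hM : ∀ x y : M, dist x y ≤ 1)
    (h : IsExistentiallyClosed M) : ApproxExtProp M := by
  intro n a r hr hcons ε hε
  by_cases hzero : ∃ i, r i = 0
  · obtain ⟨i, hi⟩ := hzero
    refine ⟨a i, fun j => ?_⟩
    have hij := hcons i j
    rw [hi, zero_sub, abs_neg, abs_of_nonneg (hr j).1, zero_add] at hij
    simpa [le_antisymm hij.2 hij.1] using hε.le
  push Not at hzero
  have hpos : ∀ i, 0 < r i := fun i => (hr i).1.lt_of_ne' (hzero i)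
  obtain ⟨N, _, g, b, hg, hN, hb⟩ := (isKatetov_katetovExtend hcons hpos hM).exists_extension
    (fun x => katetovExtend_le x none) hM
  obtain ⟨y, hy⟩ := h N _ hN g hg b n a ε hε
  have hr₁ : ∀ i, r i ≤ 1 := fun i => (hr i).2
  exact ⟨y, fun i => by simpa [hb, katetovExtend_apply_tuple hcons hr₁] using hy i⟩

theorem ApproxExtProp.exists_halving (hM : ∀ x y : M, dist x y ≤ 1) (h : ApproxExtProp M)
    {n : ℕ} {a : Fin n → M} {r : Fin n → ℝ} (hr : ∀ i, 0 ≤ r i ∧ r i ≤ 1)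
    (hcons : IsKatetovTuple a r) {e : ℝ} (he : 0 < e) {z : M}
    (hz : dist (fun i => dist z (a i)) r ≤ e) :
    ∃ w, dist (fun i => dist w (a i)) r ≤ e / 2 ∧ dist w z ≤ 2 * e := by
  set δ := dist (fun i => dist z (a i)) r
  have hδ : ∀ i, |dist z (a i) - r i| ≤ δ := dist_le_pi_dist (fun i => dist z (a i)) r
  have hδ₀ : 0 ≤ δ := dist_nonneg
  have hδ₁ : δ ≤ 1 := (dist_pi_le_iff zero_le_one).2 fun j => by
    rw [Real.dist_eq, abs_sub_le_iff]
    constructor <;> linarith [hM z (a j), hr j, dist_nonneg (x := z) (y := a j)]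
  have hδr : ∀ i, δ ≤ r i + dist z (a i) := fun i =>
    (dist_pi_le_iff (add_nonneg (hr i).1 dist_nonneg)).2 fun j => by
      rw [Real.dist_eq, abs_sub_le_iff]
      have := abs_sub_le_iff.1 (hcons i j).1
      constructor <;> linarith [dist_triangle z (a i) (a j), dist_triangle (a i) z (a j),
        dist_comm z (a i), (hcons i j).2]
  have hz' : ∀ i, |r i - δ| ≤ dist (a i) z ∧ dist (a i) z ≤ r i + δ := fun i => by
    rw [dist_comm, abs_sub_le_iff]
    have := abs_sub_le_iff.1 (hδ i)
    exact ⟨⟨by linarith, by linarith [hδr i]⟩, by linarith⟩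
  obtain ⟨w, hw⟩ := h (n + 1) _ _
    (fun i => by induction i using Fin.lastCases <;> simp [hδ₀, hδ₁, hr])
    (hcons.snoc hδ₀ hz') (e / 2) (by positivity)
  refine ⟨w, (dist_pi_le_iff (by positivity)).2 fun i => ?_, ?_⟩
  · simpa [Real.dist_eq] using hw i.castSucc
  · have := (abs_sub_le_iff.1 (hw (Fin.last n))).1
    simp only [Fin.snoc_last] at this
    linarith

theorem ApproxExtProp.exactExtProp [CompleteSpace M] (hM : ∀ x y : M, dist x y ≤ 1)
    (h : ApproxExtProp M) : ExactExtProp M := by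
  intro n a r hr hcons
  obtain ⟨z₀, hz₀⟩ := h n a r hr hcons 1 one_pos
  obtain ⟨y, hy⟩ := exists_le_zero_of_halving (F := fun z => dist (fun i => dist z (a i)) r)
    (by fun_prop) (fun e he z hz => h.exists_halving hM hr hcons he hz) one_pos
    ((dist_pi_le_iff zero_le_one).2 hz₀)
  exact ⟨y, fun i => dist_le_zero.1 ((dist_le_pi_dist _ r i).trans hy)⟩

theorem ExactExtProp.of_isometryEquiv {U : Type} [MetricSpace U] (e : M ≃ᵢ U)
    (h : ExactExtProp U) : ExactExtProp M := by
  intro n a r hr hcons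
  obtain ⟨y, hy⟩ := h n (e ∘ a) r hr (by simpa [IsKatetovTuple, e.dist_eq] using hcons)
  exact ⟨e.symm y, fun i => by rw [← e.dist_eq, e.apply_symm_apply]; exact hy i⟩

theorem ExactExtProp.isExistentiallyClosed (h : ExactExtProp M) : IsExistentiallyClosed M := by
  intro N _ hN g hg b n a ε hε
  obtain ⟨y, hy⟩ := h n a (fun i => dist b (g (a i))) (fun i => ⟨dist_nonneg, hN _ _⟩)
    fun i j => by
      rw [← hg.dist_eq, dist_comm b, dist_comm b]
      exact ⟨abs_dist_sub_le _ _ b, dist_triangle_right _ _ b⟩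
  exact ⟨y, fun i => by simpa [hy i] using hε.le⟩

end ExtensionProperties

/-- A complete separable metric space `M` of diameter `≤ 1` is
existentially closed among metric spaces of diameter `≤ 1` — for every metric space
`N ⊇ M` of diameter `≤ 1`, every `b ∈ N`, every finite tuple from `M` and every `ε > 0`
the distances from `b` to the tuple are approximately realized inside `M` — if and only
if `M` is isometric to the Urysohn space of diameter 1. -/
theorem ec_iff_urysohn (M : Type) [MetricSpace M] [CompleteSpace M] [SeparableSpace M]
    (hbM : ∀ x y : M, dist x y ≤ 1) :
    (∀ (N : Type) (_ : MetricSpace N), (∀ x y : N, dist x y ≤ 1) →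
      ∀ g : M → N, Isometry g → ∀ b : N, ∀ (n : ℕ) (a : Fin n → M),
        ∀ ε : ℝ, 0 < ε → ∃ y : M, ∀ i, |dist y (a i) - dist b (g (a i))| ≤ ε) ↔
    (∃ (U : Type) (_ : MetricSpace U), IsUrysohn U ∧ Nonempty (M ≃ᵢ U)) := by
  change IsExistentiallyClosed M ↔ _
  constructor
  · intro hec
    exact ⟨M, inferInstance, ⟨inferInstance, inferInstance, hbM,
      (hec.approxExtProp hbM).exactExtProp hbM⟩, ⟨IsometryEquiv.refl M⟩⟩
  · rintro ⟨U, _, ⟨-, -, -, hU⟩, ⟨e⟩⟩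
    exact (hU.of_isometryEquiv e).isExistentiallyClosed
end
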